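/- arXiv:2304.14557 — 2 statements merged into one kernel-verified Lean document; each statement's English description precedes it below -/
import Mathlib

section
/- Every acyclic hypergraph is chordal, i.e., every cycle of length at least 4 in its clique-graph has a chord. -/
open Finset

structure FinHypergraph (V : Type*) [DecidableEq V] [Fintype V] where
  edges : Finset (Finset V)

namespace FinHypergraph

variable {V : Type*} [DecidableEq V] [Fintype V]

/-- Two vertex sets touch in `H`: they intersect, or some hyperedge meets both. -/
def touch (H : FinHypergraph V) (S T : Finset V) : Prop :=
  (S ∩ T).Nonempty ∨ ∃ e ∈ H.edges, (e ∩ S).Nonempty ∧ (e ∩ T).Nonempty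

/-- `S` induces a connected subhypergraph of `H`. -/
def connSet (H : FinHypergraph V) (S : Finset V) : Prop :=
  ∀ a ∈ S, ∀ b ∈ S,
    Relation.ReflTransGen (fun x y => x ∈ S ∧ y ∈ S ∧ ∃ e ∈ H.edges, x ∈ e ∧ y ∈ e) a b

/-- An embedding of the `k`-clique into the hypergraph `H`. -/
def IsCliqueEmb (H : FinHypergraph V) (k : ℕ) (ψ : Fin k → Finset V) : Prop :=
  (∀ i, (ψ i).Nonempty) ∧ (∀ i, H.connSet (ψ i)) ∧
    ∀ i j : Fin k, i ≠ j → H.touch (ψ i) (ψ j)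

/-- The weak edge depth of an embedding: the max over hyperedges `e` of the number
of clique vertices whose image meets `e`. -/
def wedOf (H : FinHypergraph V) {k : ℕ} (ψ : Fin k → Finset V) : ℕ :=
  H.edges.sup fun e => (Finset.univ.filter fun i : Fin k => ((ψ i) ∩ e).Nonempty).card

/-- `wed (C_k ↦ H)`: the minimum weak edge depth over embeddings of the `k`-clique. -/
noncomputable def wed (H : FinHypergraph V) (k : ℕ) : ℕ :=
  sInf {w | ∃ ψ : Fin k → Finset V, H.IsCliqueEmb k ψ ∧ H.wedOf ψ ≤ w}

end FinHypergraph

/-- A tree decomposition of a hypergraph. -/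
structure IsTreeDecomp {V : Type*} [DecidableEq V] [Fintype V] {ι : Type*}
    (H : FinHypergraph V) (T : SimpleGraph ι) (χ : ι → Finset V) : Prop where
  tree : T.IsTree
  covers : ∀ e ∈ H.edges, ∃ t, e ⊆ χ t
  conn : ∀ v : V, (T.induce {t | v ∈ χ t}).Connected

/-- The clique-graph of a hypergraph, as a simple graph. -/
def cliqueSG {V : Type*} [DecidableEq V] [Fintype V] (H : FinHypergraph V) :
    SimpleGraph V where
  Adj u v := u ≠ v ∧ ∃ e ∈ H.edges, u ∈ e ∧ v ∈ e
  symm := by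
    constructor
    rintro u v ⟨h, e, he, hu, hv⟩
    exact ⟨h.symm, e, he, hv, hu⟩
  loopless := by
    constructor
    rintro u ⟨h, _⟩
    exact h rfl

/-- A simple graph is chordal: every cycle of length at least 4 has a chord. -/
def IsChordal {W : Type*} (G : SimpleGraph W) : Prop :=
  ∀ ⦃v : W⦄ (c : G.Walk v v), c.IsCycle → 4 ≤ c.length →
    ∃ u w : W, u ∈ c.support ∧ w ∈ c.support ∧ G.Adj u w ∧ s(u, w) ∉ c.edges

/-- A hypergraph is acyclic if it has a tree decomposition whose bags are
hyperedges. -/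
def FinHypergraph.Acyclic {V : Type*} [DecidableEq V] [Fintype V]
    (H : FinHypergraph V) : Prop :=
  ∃ (n : ℕ) (T : SimpleGraph (Fin n)) (χ : Fin n → Finset V),
    IsTreeDecomp H T χ ∧ ∀ t, χ t ∈ H.edges

/-!
For a vertex `v`, the tree nodes whose bags contain `v` form a subtree `S v` of the join tree, and
vertices adjacent in the clique-graph have intersecting subtrees, while intersecting subtrees of
distinct vertices give adjacent vertices because every bag is a hyperedge. A chordless cycle
`v₀, …, v_{k-1}` with `k ≥ 4` would thus give a cyclic sequence of subtrees in which consecutive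
ones meet but no others do. Take a leaf `t` of the union of these subtrees. If some `S vᵢ = {t}`,
then `S vᵢ₋₁` and `S vᵢ₊₁` meet at `t`. Otherwise every subtree containing `t` also contains the
unique neighbour of `t` in the union, so deleting `t` from all of them preserves all hypotheses,
and we conclude by induction on the size of the union.
-/

lemma exists_inter_nonempty_of_eq_singleton {ι : Type*} [DecidableEq ι] {k : ℕ} [NeZero k]
    (hk : 4 ≤ k) {S : ZMod k → Finset ι} (hcons : ∀ i, (S i ∩ S (i + 1)).Nonempty)
    {i : ZMod k} {t : ι} (hi : S i = {t}) :
    ∃ i j, i ≠ j ∧ j ≠ i + 1 ∧ i ≠ j + 1 ∧ (S i ∩ S j).Nonempty := by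
  have hcast_ne : ∀ n : ℕ, 0 < n → n < k → (n : ZMod k) ≠ 0 := fun n h0 hn h => by
    simpa [ZMod.val_natCast_of_lt hn, h0.ne'] using congrArg ZMod.val h
  have h1 := hcast_ne 1 one_pos (by omega)
  have h2 := hcast_ne 2 two_pos (by omega)
  have h3 := hcast_ne 3 three_pos (by omega)
  push_cast at h1 h2 h3
  obtain ⟨x, hx⟩ := hcons (i - 1)
  obtain ⟨y, hy⟩ := hcons i
  rw [sub_add_cancel, hi, mem_inter, mem_singleton] at hx
  rw [hi, mem_inter, mem_singleton] at hy
  refine ⟨i - 1, i + 1, ?_, ?_, ?_, t, mem_inter.mpr ⟨hx.2 ▸ hx.1, hy.1 ▸ hy.2⟩⟩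
  · exact fun h => h2 (by linear_combination -h)
  · exact fun h => h1 (by linear_combination h)
  · exact fun h => h3 (by linear_combination -h)

namespace SimpleGraph

variable {ι : Type*} {T : SimpleGraph ι}

/-- In a tree these are exactly the vertex sets of subtrees. -/
def IsPathClosed (T : SimpleGraph ι) (s : Set ι) : Prop :=
  ∀ ⦃a b : ι⦄ (p : T.Walk a b), p.IsPath → a ∈ s → b ∈ s → ∀ x ∈ p.support, x ∈ s

lemma IsAcyclic.isPathClosed_of_preconnected (hT : T.IsAcyclic) {s : Set ι}
    (hs : (T.induce s).Preconnected) : T.IsPathClosed s := by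
  classical
  intro a b p hp ha hb x hx
  obtain ⟨w⟩ := hs ⟨a, ha⟩ ⟨b, hb⟩
  let w' : T.Walk a b := w.map (Embedding.induce s).toHom
  have hbypass : w'.bypass = p :=
    congrArg Subtype.val <| (hT.subsingleton_path a b).elim ⟨_, w'.bypass_isPath⟩ ⟨p, hp⟩
  have hx' : x ∈ w'.support := w'.support_bypass_subset_support (hbypass ▸ hx)
  obtain ⟨y, -, rfl⟩ := List.mem_map.mp (w.support_map _ ▸ hx')
  exact y.2

lemma IsPathClosed.diff_singleton {s : Set ι} (hs : T.IsPathClosed s) {t : ι}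
    (ht : (T.neighborSet t ∩ s).Subsingleton) : T.IsPathClosed (s \ {t}) := by
  rintro a b p hp ⟨ha, hat⟩ ⟨hb, hbt⟩ x hx
  refine ⟨hs p hp ha hb x hx, fun hxt => ?_⟩
  obtain ⟨m, rfl, hm⟩ := Walk.mem_support_iff_exists_getVert.mp hx
  rw [Set.mem_singleton_iff] at hxt
  subst hxt
  have hm0 : m ≠ 0 := by rintro rfl; simp at hat
  have hml : m ≠ p.length := by rintro rfl; simp at hbt
  have hprev : p.getVert (m - 1) ∈ T.neighborSet (p.getVert m) ∩ s := by
    refine ⟨?_, hs p hp ha hb _ (p.getVert_mem_support _)⟩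
    simpa [Nat.sub_add_cancel (Nat.pos_of_ne_zero hm0)] using
      (p.adj_getVert_succ (i := m - 1) (by omega)).symm
  have hnext : p.getVert (m + 1) ∈ T.neighborSet (p.getVert m) ∩ s :=
    ⟨p.adj_getVert_succ (by omega), hs p hp ha hb _ (p.getVert_mem_support _)⟩
  have := hp.getVert_injOn (by simp only [Set.mem_ofPred_eq]; omega)
    (by simp only [Set.mem_ofPred_eq]; omega) (ht hprev hnext)
  omega

lemma IsPathClosed.exists_adj_mem (hT : T.Preconnected) {s : Set ι} (hs : T.IsPathClosed s)
    (hsn : s.Nontrivial) {t : ι} (ht : t ∈ s) : ∃ u ∈ s, T.Adj t u := by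
  obtain ⟨x, hx, hxt⟩ := hsn.exists_ne t
  obtain ⟨p, hp, -⟩ := (hT t x).exists_path_of_dist
  exact ⟨p.snd, hs p hp ht hx _ (p.getVert_mem_support 1), p.adj_snd (Walk.not_nil_of_ne hxt.symm)⟩

/-- A vertex of `U` farthest from some `r ∈ U` works: each of its neighbours in `U` is the
penultimate vertex of the path from `r`. -/
lemma IsTree.exists_mem_neighborSet_inter_subsingleton (hT : T.IsTree) {U : Finset ι}
    (hU : U.Nonempty) : ∃ t ∈ U, (T.neighborSet t ∩ U).Subsingleton := by
  obtain ⟨r, hr⟩ := hU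
  obtain ⟨t, htU, hmax⟩ := U.exists_max_image (T.dist r) ⟨r, hr⟩
  obtain ⟨q, hq, -⟩ := (hT.connected r t).exists_path_of_dist
  have hpen : ∀ s ∈ T.neighborSet t ∩ U, s = q.penultimate := by
    rintro s ⟨hs, hsU⟩
    have hd : T.dist r s + 1 = T.dist r t := by
      have := hmax s hsU
      rcases hT.dist_eq_dist_add_one_of_adj r hs with h | h <;> omega
    obtain ⟨p, -, hp⟩ := (hT.connected r s).exists_path_of_dist
    have hpath : (p.concat hs.symm).IsPath :=
      (p.concat hs.symm).isPath_of_length_eq_dist (by simp [hp, hd])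
    have : p.concat hs.symm = q :=
      congrArg Subtype.val <| (hT.isAcyclic.subsingleton_path r t).elim ⟨_, hpath⟩ ⟨q, hq⟩
    simp [← this]
  exact ⟨t, htU, fun s hs s' hs' => (hpen s hs).trans (hpen s' hs').symm⟩

lemma inter_erase_nonempty_of_isPathClosed [DecidableEq ι] (hT : T.Preconnected)
    {U A B : Finset ι} {t : ι} (hleaf : (T.neighborSet t ∩ U).Subsingleton)
    (hAU : A ⊆ U) (hBU : B ⊆ U) (hA : T.IsPathClosed A) (hB : T.IsPathClosed B)
    (hAt : A ≠ {t}) (hBt : B ≠ {t}) (hAB : (A ∩ B).Nonempty) :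
    (A.erase t ∩ B.erase t).Nonempty := by
  obtain ⟨x, hx⟩ := hAB
  rw [mem_inter] at hx
  by_cases hxt : x = t
  · subst hxt
    obtain ⟨u, huA, hu⟩ :=
      hA.exists_adj_mem hT (by simpa using (nontrivial_iff_ne_singleton hx.1).mpr hAt) hx.1
    obtain ⟨u', hu'B, hu'⟩ :=
      hB.exists_adj_mem hT (by simpa using (nontrivial_iff_ne_singleton hx.2).mpr hBt) hx.2
    have huu' : u = u' := hleaf ⟨hu, hAU huA⟩ ⟨hu', hBU hu'B⟩
    subst huu'
    exact ⟨u, mem_inter.mpr ⟨mem_erase.mpr ⟨hu.ne', huA⟩, mem_erase.mpr ⟨hu.ne', hu'B⟩⟩⟩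
  · exact ⟨x, mem_inter.mpr ⟨mem_erase.mpr ⟨hxt, hx.1⟩, mem_erase.mpr ⟨hxt, hx.2⟩⟩⟩

theorem IsTree.exists_inter_nonempty_of_cyclic [DecidableEq ι] (hT : T.IsTree) {k : ℕ} [NeZero k]
    (hk : 4 ≤ k) (S : ZMod k → Finset ι) (hS : ∀ i, T.IsPathClosed (S i))
    (hcons : ∀ i, (S i ∩ S (i + 1)).Nonempty) :
    ∃ i j, i ≠ j ∧ j ≠ i + 1 ∧ i ≠ j + 1 ∧ (S i ∩ S j).Nonempty := by
  induction hN : (univ.biUnion S).card using Nat.strong_induction_on generalizing S with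
  | _ N ih =>
  have hSU : ∀ i, S i ⊆ univ.biUnion S := fun i => subset_biUnion_of_mem S (mem_univ i)
  obtain ⟨t, htU, hleaf⟩ := hT.exists_mem_neighborSet_inter_subsingleton
    (((hcons 0).mono inter_subset_left).mono (hSU 0))
  by_cases hsing : ∃ i, S i = {t}
  · obtain ⟨i, hi⟩ := hsing
    exact exists_inter_nonempty_of_eq_singleton hk hcons hi
  push Not at hsing
  let S' : ZMod k → Finset ι := fun i => (S i).erase t
  have hcard : (univ.biUnion S').card < N := hN ▸ calc
    (univ.biUnion S').card ≤ ((univ.biUnion S).erase t).card :=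
      card_le_card (biUnion_subset.mpr fun i _ => erase_subset_erase t (hSU i))
    _ < (univ.biUnion S).card := card_erase_lt_of_mem htU
  have hS' : ∀ i, T.IsPathClosed (S' i) := fun i => by
    simpa [S', coe_erase] using
      (hS i).diff_singleton (hleaf.anti (Set.inter_subset_inter_right _ (coe_subset.mpr (hSU i))))
  have hcons' : ∀ i, (S' i ∩ S' (i + 1)).Nonempty := fun i =>
    inter_erase_nonempty_of_isPathClosed hT.connected.preconnected hleaf (hSU i) (hSU (i + 1))
      (hS i) (hS (i + 1)) (hsing i) (hsing (i + 1)) (hcons i)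
  obtain ⟨i, j, hij, hj, hi, h⟩ := ih _ hcard S' hS' hcons' rfl
  exact ⟨i, j, hij, hj, hi, h.mono (inter_subset_inter (erase_subset _ _) (erase_subset _ _))⟩

section Chordal

variable {W : Type*} {G : SimpleGraph W}

lemma Walk.getVert_val_natCast {v : W} (c : G.Walk v v) [NeZero c.length] {n : ℕ}
    (hn : n ≤ c.length) : c.getVert (n : ZMod c.length).val = c.getVert n := by
  rcases hn.lt_or_eq with hn | rfl
  · rw [ZMod.val_natCast_of_lt hn]
  · simp

theorem isChordal_of_forall_cyclic
    (h : ∀ (k : ℕ) [NeZero k], 4 ≤ k → ∀ f : ZMod k → W, Function.Injective f →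
      (∀ i, G.Adj (f i) (f (i + 1))) → ∃ i j, j ≠ i + 1 ∧ i ≠ j + 1 ∧ G.Adj (f i) (f j)) :
    IsChordal G := by
  intro v c hc hk
  have : NeZero c.length := ⟨by omega⟩
  let f : ZMod c.length → W := fun i => c.getVert i.val
  have hf : ∀ n ≤ c.length, f n = c.getVert n := fun n hn => c.getVert_val_natCast hn
  have hf_inj : f.Injective := fun i j hij => ZMod.val_injective _ <|
    hc.getVert_injOn' (by have := i.val_lt; simp only [Set.mem_ofPred_eq]; omega)
      (by have := j.val_lt; simp only [Set.mem_ofPred_eq]; omega) hij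
  have hf_adj : ∀ i, G.Adj (f i) (f (i + 1)) := fun i => by
    have hsucc : i + 1 = ((i.val + 1 : ℕ) : ZMod c.length) := by simp
    rw [hsucc, hf _ i.val_lt]
    exact c.adj_getVert_succ i.val_lt
  obtain ⟨i, j, hj, hi, hadj⟩ := h _ hk f hf_inj hf_adj
  refine ⟨f i, f j, c.getVert_mem_support _, c.getVert_mem_support _, hadj, fun hmem => ?_⟩
  obtain ⟨l, hl, hl'⟩ := c.mk_mem_edges_iff_exists.mp hmem
  rw [← hf l hl.le, ← hf (l + 1) hl, Sym2.eq_iff] at hl'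
  push_cast at hl'
  rcases hl' with ⟨hli, hlj⟩ | ⟨hlj, hli⟩
  · exact hj (by rw [← hf_inj hli, ← hf_inj hlj])
  · exact hi (by rw [← hf_inj hli, ← hf_inj hlj])

end Chordal

end SimpleGraph

lemma IsTreeDecomp.isPathClosed {V ι : Type*} [DecidableEq V] [Fintype V] {H : FinHypergraph V}
    {T : SimpleGraph ι} {χ : ι → Finset V} (hd : IsTreeDecomp H T χ) (v : V) :
    T.IsPathClosed {t | v ∈ χ t} :=
  hd.tree.isAcyclic.isPathClosed_of_preconnected (hd.conn v).preconnected

/-- Every acyclic hypergraph is chordal: every cycle of length at least 4 in its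
clique-graph has a chord. -/
theorem acyclic_chordal {V : Type*} [DecidableEq V] [Fintype V]
    (H : FinHypergraph V) (h : H.Acyclic) : IsChordal (cliqueSG H) := by
  obtain ⟨n, T, χ, hd, hbag⟩ := h
  refine SimpleGraph.isChordal_of_forall_cyclic fun k _ hk f hf hadj => ?_
  let S : ZMod k → Finset (Fin n) := fun i => {t | f i ∈ χ t}
  have hS : ∀ i, T.IsPathClosed (S i) := fun i => by simpa [S] using hd.isPathClosed (f i)
  have hcons : ∀ i, (S i ∩ S (i + 1)).Nonempty := fun i => by
    obtain ⟨-, e, he, hi, hi'⟩ := hadj i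
    obtain ⟨t, ht⟩ := hd.covers e he
    exact ⟨t, by simp [S, ht hi, ht hi']⟩
  obtain ⟨i, j, hij, hj, hi, t, ht⟩ := hd.tree.exists_inter_nonempty_of_cyclic hk S hS hcons
  simp only [S, mem_inter, mem_filter, mem_univ, true_and] at ht
  exact ⟨i, j, hj, hi, hf.ne hij, χ t, hbag t, ht⟩
end

section
/- For the (ℓ,k)-hyperclique hypergraph H_{ℓ,k} with 1 < k ≤ ℓ, the identity embedding of the ℓ-clique (mapping i to {x_i}) has weak edge depth k, and H_{ℓ,k} has a fractional edge cover of total weight ℓ/k; hence emb(H_{ℓ,k}) = subw(H_{ℓ,k}) = fhw(H_{ℓ,k}) = ℓ/k. -/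
/-!
Every two vertices of `H_{ℓ,k}` lie in a common hyperedge, so by the Helly property of subtrees
every tree decomposition has a bag containing all vertices: `fhw` is the fractional edge cover
number `ρ*(V)`, and `subw` is the largest value of `F(V)` over edge-bounded submodular `F`.
Weight `1 / C(ℓ-1, k-1)` on every hyperedge is a fractional cover of total weight `ℓ/k`.
A Shearer-type argument gives `F(V) ≤ ∑ w_e F(e)` for every fractional cover `w`, hence
`subw ≤ ℓ/k`, and, for `F = |·|/k`, no cover is lighter than `ℓ/k`. Averaging over the same cover,
every embedding of the `j`-clique has weak edge depth at least `jk/ℓ`, and two copies of the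
identity embedding of the `ℓ`-clique attain this for `j = 2ℓ`.
-/
open Finset

/-- `emb(H)` -/
noncomputable def embPower {V : Type*} [DecidableEq V] [Fintype V] (H : FinHypergraph V) : ℝ :=
  sSup {x : ℝ | ∃ k : ℕ, 3 ≤ k ∧ x = (k : ℝ) / (H.wed k : ℝ)}

def Submodular {V : Type*} [DecidableEq V] (F : Finset V → ℝ) : Prop :=
  ∀ A B : Finset V, F (A ∪ B) + F (A ∩ B) ≤ F A + F B

noncomputable def subw {V : Type*} [DecidableEq V] [Fintype V] (H : FinHypergraph V) : ℝ :=
  sSup {w : ℝ | ∃ F : Finset V → ℝ,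
    (∀ S, 0 ≤ F S) ∧ (∀ A B : Finset V, A ⊆ B → F A ≤ F B) ∧ Submodular F ∧
    (∀ e ∈ H.edges, F e ≤ 1) ∧
    w = sInf {b : ℝ | ∃ (n : ℕ) (T : SimpleGraph (Fin n)) (χ : Fin n → Finset V),
      IsTreeDecomp H T χ ∧ ∀ t, F (χ t) ≤ b}}

def IsFracCover {W : Type*} [DecidableEq W] [Fintype W] (H : FinHypergraph W)
    (S : Finset W) (w : Finset W → ℝ) : Prop :=
  (∀ e, 0 ≤ w e) ∧ (∀ e ∉ H.edges, w e = 0) ∧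
    ∀ v ∈ S, 1 ≤ ∑ e ∈ H.edges, (if v ∈ e then w e else 0)

noncomputable def fhw {V : Type*} [DecidableEq V] [Fintype V] (H : FinHypergraph V) : ℝ :=
  sInf {b : ℝ | ∃ (n : ℕ) (T : SimpleGraph (Fin n)) (χ : Fin n → Finset V),
    IsTreeDecomp H T χ ∧ ∀ t, ∃ w : Finset V → ℝ,
      IsFracCover H (χ t) w ∧ ∑ e ∈ H.edges, w e ≤ b}

def hyperclique (ℓ k : ℕ) : FinHypergraph (Fin ℓ) :=
  ⟨Finset.univ.powersetCard k⟩

namespace SimpleGraph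

variable {ι : Type*} {T : SimpleGraph ι}

lemma Walk.IsPath.append {u v w : ι} {p : T.Walk u v} {q : T.Walk v w}
    (hp : p.IsPath) (hq : q.IsPath) (h : ∀ x ∈ p.support, x ∈ q.support → x = v) :
    (p.append q).IsPath := by
  rw [Walk.isPath_def, Walk.support_append]
  refine hp.support_nodup.append (hq.support_nodup.sublist (List.tail_sublist _))
    fun x hxp hxq => ?_
  have hnd := hq.support_nodup
  rw [← q.cons_tail_support] at hnd
  exact (List.nodup_cons.1 hnd).1 (h x hxp (List.mem_of_mem_tail hxq) ▸ hxq)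

lemma Walk.eq_of_mem_support_of_length_eq_dist {r g x : ι} {p : T.Walk r g}
    (hp : p.length = T.dist r g) (hx : x ∈ p.support) (hle : T.dist r g ≤ T.dist r x) :
    x = g := by
  classical
  have hsplit := congrArg Walk.length (p.take_spec hx)
  rw [Walk.length_append] at hsplit
  have := dist_le (p.takeUntil x hx)
  exact Walk.eq_of_length_eq_zero (p := p.dropUntil x hx) (by omega)

lemma IsAcyclic.eq_of_isPath (hT : T.IsAcyclic) {u v : ι} {p q : T.Walk u v} (hp : p.IsPath)
    (hq : q.IsPath) : p = q :=
  congrArg Subtype.val (@Subsingleton.elim _ (hT.subsingleton_path u v) ⟨p, hp⟩ ⟨q, hq⟩)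

lemma IsAcyclic.length_eq_dist (hT : T.IsAcyclic) {u v : ι} {p : T.Walk u v}
    (hp : p.IsPath) : p.length = T.dist u v := by
  obtain ⟨q, hq, hql⟩ := p.reachable.exists_path_of_dist
  rw [← hql, hT.eq_of_isPath hp hq]

lemma IsAcyclic.support_subset_of_connected_induce (hT : T.IsAcyclic) {S : Set ι}
    (hS : (T.induce S).Connected) {a b : ι} (ha : a ∈ S) (hb : b ∈ S) {p : T.Walk a b}
    (hp : p.IsPath) : ∀ x ∈ p.support, x ∈ S := by
  classical
  let q : T.Walk a b := ((hS ⟨a, ha⟩ ⟨b, hb⟩).some.map (Embedding.induce S).toHom)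
  have hqS : ∀ x ∈ q.support, x ∈ S := by
    intro x hx
    obtain ⟨y, -, rfl⟩ := List.mem_map.1 ((Walk.support_map _ _) ▸ hx)
    exact y.2
  rw [hT.eq_of_isPath hp q.bypass_isPath]
  exact fun x hx => hqS x (q.support_bypass_subset_support hx)

lemma IsTree.mem_support_of_dist_le {S : Set ι} (hT : T.IsTree) (hS : (T.induce S).Connected)
    {r g a : ι} (hg : g ∈ S) (hmin : ∀ x ∈ S, T.dist r g ≤ T.dist r x) (ha : a ∈ S)
    {q : T.Walk r a} (hq : q.IsPath) : g ∈ q.support := by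
  obtain ⟨p, hp, hpl⟩ := hT.connected.exists_path_of_dist r g
  obtain ⟨s, hs, -⟩ := hT.connected.exists_path_of_dist g a
  have hsS := hT.isAcyclic.support_subset_of_connected_induce hS hg ha hs
  have hps : (p.append s).IsPath := hp.append hs fun x hxp hxs =>
    Walk.eq_of_mem_support_of_length_eq_dist hpl hxp (hmin x (hsS x hxs))
  rw [← hT.isAcyclic.eq_of_isPath hps hq, Walk.mem_support_append_iff]
  exact Or.inl p.end_mem_support

/-- Helly property of subtrees. The gate of `A v`, its point closest to a root `r`, lies on every
path from `r` into `A v`; the gate farthest from `r` then lies in every `A v`. -/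
theorem IsTree.exists_forall_mem_of_pairwise_nonempty {κ : Type*} [Finite κ] (hT : T.IsTree)
    (A : κ → Set ι) (hA : ∀ v, (T.induce (A v)).Connected)
    (hpair : ∀ u v, (A u ∩ A v).Nonempty) : ∃ t, ∀ v, t ∈ A v := by
  obtain ⟨r⟩ := hT.connected.nonempty
  rcases isEmpty_or_nonempty κ with _ | _
  · exact ⟨r, isEmptyElim⟩
  let g v := Function.argminOn (T.dist r) (A v) (by simpa using hpair v v)
  have hgA v : g v ∈ A v := Function.argminOn_mem _ _ _
  have hgate v {a} (ha : a ∈ A v) {q : T.Walk r a} (hq : q.IsPath) : g v ∈ q.support :=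
    hT.mem_support_of_dist_le (hA v) (hgA v) (fun x hx => Function.argminOn_le _ _ hx) ha hq
  obtain ⟨u, hu⟩ := Finite.exists_max fun v => T.dist r (g v)
  refine ⟨g u, fun v => ?_⟩
  obtain ⟨a, hau, hav⟩ := hpair u v
  obtain ⟨q, hq, -⟩ := hT.connected.exists_path_of_dist r a
  obtain ⟨q₁, q₂, hq₁, hq₂, rfl⟩ := hq.mem_support_iff_exists_append.mp (hgate v hav hq)
  rcases (Walk.mem_support_append_iff _ _).mp (hgate u hau hq) with h | h
  · rw [Walk.eq_of_mem_support_of_length_eq_dist (hT.isAcyclic.length_eq_dist hq₁) h (hu v)]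
    exact hgA v
  · exact hT.isAcyclic.support_subset_of_connected_induce (hA v) (hgA v) hav hq₂ _ h

end SimpleGraph

namespace FinHypergraph

variable {V : Type*} [DecidableEq V] [Fintype V]

def CoversPairs (H : FinHypergraph V) : Prop :=
  ∀ u v, ∃ e ∈ H.edges, u ∈ e ∧ v ∈ e

variable {H : FinHypergraph V}

lemma connSet_singleton (v : V) : H.connSet {v} := by
  intro a ha b hb
  rw [mem_singleton] at ha hb
  rw [ha, hb]

lemma isCliqueEmb_const (j : ℕ) (v : V) : H.IsCliqueEmb j fun _ => {v} :=
  ⟨fun _ => singleton_nonempty v, fun _ => connSet_singleton v, fun _ _ _ => Or.inl (by simp)⟩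

lemma CoversPairs.isCliqueEmb_singleton (hH : H.CoversPairs) {j : ℕ} (φ : Fin j → V) :
    H.IsCliqueEmb j fun i => {φ i} := by
  refine ⟨fun i => singleton_nonempty _, fun i => connSet_singleton _, fun i i' _ => Or.inr ?_⟩
  obtain ⟨e, he, hi, hi'⟩ := hH (φ i) (φ i')
  exact ⟨e, he, ⟨φ i, by simpa⟩, ⟨φ i', by simpa⟩⟩

lemma wedOf_singleton {j : ℕ} (φ : Fin j → V) :
    H.wedOf (fun i => {φ i}) = H.edges.sup fun e => #{i | φ i ∈ e} := by
  simp only [wedOf, Finset.Nonempty, mem_inter, mem_singleton, exists_eq_left]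

lemma wed_le_wedOf {j : ℕ} {ψ : Fin j → Finset V} (hψ : H.IsCliqueEmb j ψ) :
    H.wed j ≤ H.wedOf ψ :=
  Nat.sInf_le ⟨ψ, hψ, le_rfl⟩

lemma exists_wedOf_le_wed [Nonempty V] (j : ℕ) :
    ∃ ψ, H.IsCliqueEmb j ψ ∧ H.wedOf ψ ≤ H.wed j :=
  Nat.sInf_mem (s := {w | ∃ ψ, H.IsCliqueEmb j ψ ∧ H.wedOf ψ ≤ w})
    ⟨_, _, isCliqueEmb_const j (Classical.arbitrary V), le_rfl⟩

end FinHypergraph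

section SetFunctions

variable {V : Type*}

lemma submodular_card_div [DecidableEq V] (c : ℝ) :
    Submodular fun S : Finset V => (#S : ℝ) / c := fun A B => le_of_eq <| by
  simp only [← add_div, ← Nat.cast_add, card_union_add_card_inter]

lemma monotone_card_div {c : ℝ} (hc : 0 ≤ c) : Monotone fun S : Finset V => (#S : ℝ) / c :=
  fun _ _ h => div_le_div_of_nonneg_right (by exact_mod_cast card_le_card h) hc

lemma Submodular.sub_le_sub_of_subset [DecidableEq V] {F : Finset V → ℝ} (hF : Submodular F)
    {a : V} {B S : Finset V} (hBS : B ⊆ S) (ha : a ∉ S) :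
    F (insert a S) - F S ≤ F (insert a B) - F B := by
  have h := hF (insert a B) S
  rw [show insert a B ∪ S = insert a S by grind, show insert a B ∩ S = B by grind] at h
  linarith

end SetFunctions

section FractionalCovers

variable {V : Type*} [DecidableEq V] [Fintype V] {H : FinHypergraph V} {w : Finset V → ℝ}

lemma IsFracCover.mono {S S' : Finset V} (hw : IsFracCover H S w) (h : S' ⊆ S) :
    IsFracCover H S' w :=
  ⟨hw.1, hw.2.1, fun v hv => hw.2.2 v (h hv)⟩

lemma IsFracCover.one_le_sum {S : Finset V} (hw : IsFracCover H S w) (hS : S.Nonempty) :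
    1 ≤ ∑ e ∈ H.edges, w e := by
  obtain ⟨v, hv⟩ := hS
  exact (hw.2.2 v hv).trans (sum_le_sum fun e _ => by split_ifs <;> simp [hw.1 e])

lemma IsFracCover.natCast_le_wedOf_mul (hw : IsFracCover H univ w) {j : ℕ}
    {ψ : Fin j → Finset V} (hψ : ∀ i, (ψ i).Nonempty) :
    (j : ℝ) ≤ H.wedOf ψ * ∑ e ∈ H.edges, w e := by
  choose v hv using hψ
  have hdepth : ∀ e ∈ H.edges, (#{i | v i ∈ e} : ℝ) ≤ H.wedOf ψ := fun e he => by
    have hsub : ({i | v i ∈ e} : Finset (Fin j)) ⊆ ({i | (ψ i ∩ e).Nonempty} : Finset _) :=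
        fun i hi => by
      simp only [mem_filter, mem_univ, true_and] at hi ⊢
      exact ⟨v i, mem_inter.2 ⟨hv i, hi⟩⟩
    exact_mod_cast (card_le_card hsub).trans
      (le_sup (f := fun e => #{i | (ψ i ∩ e).Nonempty}) he)
  calc (j : ℝ) = ∑ _i : Fin j, 1 := by simp
    _ ≤ ∑ i, ∑ e ∈ H.edges, if v i ∈ e then w e else 0 :=
      sum_le_sum fun i _ => hw.2.2 (v i) (mem_univ _)
    _ = ∑ e ∈ H.edges, #{i | v i ∈ e} * w e := by
      rw [sum_comm]
      refine sum_congr rfl fun e _ => ?_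
      rw [← sum_filter, sum_const, nsmul_eq_mul]
    _ ≤ ∑ e ∈ H.edges, H.wedOf ψ * w e :=
      sum_le_sum fun e he => mul_le_mul_of_nonneg_right (hdepth e he) (hw.1 e)
    _ = H.wedOf ψ * ∑ e ∈ H.edges, w e := by rw [mul_sum]

lemma IsFracCover.natCast_le_wed_mul [Nonempty V] (hw : IsFracCover H univ w) (j : ℕ) :
    (j : ℝ) ≤ H.wed j * ∑ e ∈ H.edges, w e := by
  obtain ⟨ψ, hψ, hle⟩ := H.exists_wedOf_le_wed j
  exact (hw.natCast_le_wedOf_mul hψ.1).trans <| mul_le_mul_of_nonneg_right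
    (Nat.cast_le.2 hle) (sum_nonneg fun e _ => hw.1 e)

/-- Shearer-type inequality: adding the vertices of `S` one at a time, submodularity bounds each
increment by the increment inside every hyperedge through the new vertex. -/
theorem Submodular.sub_le_sum_of_isFracCover {F : Finset V → ℝ} (hF : Submodular F)
    (hmono : Monotone F) {S : Finset V} (hw : IsFracCover H S w) :
    F S - F ∅ ≤ ∑ e ∈ H.edges, w e * (F (e ∩ S) - F ∅) := by
  induction S using Finset.induction_on with
  | empty => simp
  | insert a S haS ih =>
    have hgain : 0 ≤ F (insert a S) - F S := sub_nonneg.2 (hmono (subset_insert a S))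
    have hstep : F (insert a S) - F S ≤
        ∑ e ∈ H.edges, w e * (F (e ∩ insert a S) - F (e ∩ S)) :=
      calc F (insert a S) - F S
          ≤ (∑ e ∈ H.edges, if a ∈ e then w e else 0) * (F (insert a S) - F S) :=
            le_mul_of_one_le_left hgain (hw.2.2 a (mem_insert_self a S))
        _ = ∑ e ∈ H.edges, if a ∈ e then w e * (F (insert a S) - F S) else 0 := by
            simp only [sum_mul, ite_mul, zero_mul]
        _ ≤ _ := sum_le_sum fun e _ => by
            split_ifs with hae
            · rw [inter_insert_of_mem hae]
              exact mul_le_mul_of_nonneg_left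
                (hF.sub_le_sub_of_subset inter_subset_right haS) (hw.1 e)
            · simp [inter_insert_of_notMem hae]
    calc F (insert a S) - F ∅ = (F S - F ∅) + (F (insert a S) - F S) := by ring
      _ ≤ ∑ e ∈ H.edges, w e * (F (e ∩ S) - F ∅) +
          ∑ e ∈ H.edges, w e * (F (e ∩ insert a S) - F (e ∩ S)) :=
        add_le_add (ih (hw.mono (subset_insert a S))) hstep
      _ = ∑ e ∈ H.edges, w e * (F (e ∩ insert a S) - F ∅) := by
        rw [← sum_add_distrib]
        exact sum_congr rfl fun e _ => by ring

theorem Submodular.le_sum_mul_of_isFracCover {F : Finset V → ℝ} (hF : Submodular F)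
    (hmono : Monotone F) (hF0 : 0 ≤ F ∅) {S : Finset V} (hS : S.Nonempty)
    (hw : IsFracCover H S w) :
    F S ≤ ∑ e ∈ H.edges, w e * F e := by
  have hshearer := hF.sub_le_sum_of_isFracCover hmono hw
  have hweight := hw.one_le_sum hS
  have hrestrict : ∑ e ∈ H.edges, w e * (F (e ∩ S) - F ∅) ≤
      ∑ e ∈ H.edges, w e * F e - (∑ e ∈ H.edges, w e) * F ∅ := by
    rw [sum_mul, ← sum_sub_distrib]
    exact sum_le_sum fun e _ => by
      nlinarith [hw.1 e, hmono (inter_subset_left : e ∩ S ⊆ e)]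
  nlinarith

lemma IsFracCover.card_div_le_sum {k : ℕ} (hH : ∀ e ∈ H.edges, #e ≤ k) {S : Finset V}
    (hw : IsFracCover H S w) : (#S : ℝ) / k ≤ ∑ e ∈ H.edges, w e := by
  rcases S.eq_empty_or_nonempty with rfl | hS
  · simpa using sum_nonneg fun e _ => hw.1 e
  calc (#S : ℝ) / k ≤ ∑ e ∈ H.edges, w e * (#e / k) :=
        (submodular_card_div _).le_sum_mul_of_isFracCover (monotone_card_div k.cast_nonneg)
          (by simp) hS hw
    _ ≤ ∑ e ∈ H.edges, w e := sum_le_sum fun e he => mul_le_of_le_one_right (hw.1 e)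
        (div_le_one_of_le₀ (by exact_mod_cast hH e he) k.cast_nonneg)

end FractionalCovers

section TreeDecompositions

variable {V : Type*} [DecidableEq V] [Fintype V] {H : FinHypergraph V}

lemma isTreeDecomp_const_univ (H : FinHypergraph V) :
    IsTreeDecomp H (⊥ : SimpleGraph (Fin 1)) fun _ => univ where
  tree := .of_subsingleton
  covers e _ := ⟨0, subset_univ e⟩
  conn v :=
    have : Nonempty {_t : Fin 1 | v ∈ (univ : Finset V)} := ⟨⟨0, mem_univ v⟩⟩
    SimpleGraph.IsTree.of_subsingleton.connected

/-- The bags containing `u` and those containing `v` form two subtrees, which meet because some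
bag contains a hyperedge through `u` and `v`; by the Helly property all of them meet. -/
lemma FinHypergraph.CoversPairs.exists_bag_eq_univ (hH : H.CoversPairs) {ι : Type*}
    {T : SimpleGraph ι} {χ : ι → Finset V} (hT : IsTreeDecomp H T χ) : ∃ t, χ t = univ := by
  obtain ⟨t, ht⟩ := hT.tree.exists_forall_mem_of_pairwise_nonempty (fun v => {t | v ∈ χ t})
    hT.conn fun u v => by
      obtain ⟨e, he, hu, hv⟩ := hH u v
      obtain ⟨t, ht⟩ := hT.covers e he
      exact ⟨t, ht hu, ht hv⟩
  exact ⟨t, eq_univ_of_forall ht⟩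

lemma FinHypergraph.CoversPairs.exists_isTreeDecomp_iff (hH : H.CoversPairs)
    (P : Finset V → Prop) :
    (∃ (n : ℕ) (T : SimpleGraph (Fin n)) (χ : Fin n → Finset V),
      IsTreeDecomp H T χ ∧ ∀ t, P (χ t)) ↔ P univ := by
  refine ⟨fun ⟨_, _, _, hT, hP⟩ => ?_, fun h => ⟨1, ⊥, _, isTreeDecomp_const_univ H, fun _ => h⟩⟩
  obtain ⟨t, ht⟩ := hH.exists_bag_eq_univ hT
  exact ht ▸ hP t

lemma FinHypergraph.CoversPairs.sInf_treeDecomp_eq (hH : H.CoversPairs) (F : Finset V → ℝ) :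
    sInf {b : ℝ | ∃ (n : ℕ) (T : SimpleGraph (Fin n)) (χ : Fin n → Finset V),
      IsTreeDecomp H T χ ∧ ∀ t, F (χ t) ≤ b} = F univ := by
  calc _ = sInf (Set.Ici (F univ)) :=
        congrArg sInf (Set.ext fun b => hH.exists_isTreeDecomp_iff fun B => F B ≤ b)
    _ = F univ := csInf_Ici

lemma FinHypergraph.CoversPairs.fhw_eq (hH : H.CoversPairs) :
    fhw H = sInf {b : ℝ | ∃ w, IsFracCover H univ w ∧ ∑ e ∈ H.edges, w e ≤ b} :=
  congrArg sInf <| Set.ext fun b =>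
    hH.exists_isTreeDecomp_iff fun B => ∃ w, IsFracCover H B w ∧ ∑ e ∈ H.edges, w e ≤ b

end TreeDecompositions

lemma Nat.choose_mul_eq_mul_choose_sub_one {n k : ℕ} (hk : 0 < k) :
    n.choose k * k = n * (n - 1).choose (k - 1) := by
  obtain ⟨m, rfl⟩ : ∃ m, k = m + 1 := ⟨k - 1, by omega⟩
  cases n with
  | zero => simp
  | succ n => exact (Nat.add_one_mul_choose_eq n m).symm

section Hyperclique

variable {ℓ k : ℕ}

lemma mem_hyperclique_edges {e : Finset (Fin ℓ)} : e ∈ (hyperclique ℓ k).edges ↔ #e = k := by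
  simp [hyperclique]

lemma hyperclique_edges_nonempty (hkℓ : k ≤ ℓ) : (hyperclique ℓ k).edges.Nonempty :=
  powersetCard_nonempty.2 (by simpa using hkℓ)

lemma coversPairs_hyperclique (hk : 1 < k) (hkℓ : k ≤ ℓ) : (hyperclique ℓ k).CoversPairs := by
  intro u v
  obtain ⟨e, hsub, -, he⟩ := exists_subsuperset_card_eq (subset_univ {u, v})
    (card_le_two.trans hk) (by simpa using hkℓ)
  exact ⟨e, mem_hyperclique_edges.2 he, hsub (by simp), hsub (by simp)⟩

lemma card_filter_mem_hyperclique_edges (hk : 0 < k) (v : Fin ℓ) :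
    #{e ∈ (hyperclique ℓ k).edges | v ∈ e} = (ℓ - 1).choose (k - 1) := by
  simpa [hyperclique] using
    card_filter_powersetCard_subset {v} univ k (subset_univ _) (by simp; omega)

/-- Every vertex lies in `(ℓ-1).choose (k-1)` hyperedges, so the reciprocal weight covers it
exactly once. -/
noncomputable def hypercliqueCover (ℓ k : ℕ) (e : Finset (Fin ℓ)) : ℝ :=
  if e ∈ (hyperclique ℓ k).edges then ((ℓ - 1).choose (k - 1) : ℝ)⁻¹ else 0

lemma hypercliqueCover_of_mem {e : Finset (Fin ℓ)} (he : e ∈ (hyperclique ℓ k).edges) :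
    hypercliqueCover ℓ k e = ((ℓ - 1).choose (k - 1) : ℝ)⁻¹ :=
  if_pos he

lemma choose_sub_one_ne_zero (hk : 0 < k) (hkℓ : k ≤ ℓ) : ((ℓ - 1).choose (k - 1) : ℝ) ≠ 0 := by
  exact_mod_cast (Nat.choose_pos (by omega)).ne'

lemma isFracCover_hypercliqueCover (hk : 0 < k) (hkℓ : k ≤ ℓ) :
    IsFracCover (hyperclique ℓ k) univ (hypercliqueCover ℓ k) := by
  refine ⟨fun e => ?_, fun e he => if_neg he, fun v _ => ?_⟩
  · unfold hypercliqueCover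
    split_ifs <;> positivity
  · rw [← sum_filter, sum_congr rfl fun e he => hypercliqueCover_of_mem (mem_filter.1 he).1,
      sum_const, card_filter_mem_hyperclique_edges hk, nsmul_eq_mul,
      mul_inv_cancel₀ (choose_sub_one_ne_zero hk hkℓ)]

lemma sum_hypercliqueCover (hk : 0 < k) (hkℓ : k ≤ ℓ) :
    ∑ e ∈ (hyperclique ℓ k).edges, hypercliqueCover ℓ k e = ℓ / k := by
  rw [sum_congr rfl fun e => hypercliqueCover_of_mem, sum_const, nsmul_eq_mul,
    ← div_eq_mul_inv, div_eq_div_iff (choose_sub_one_ne_zero hk hkℓ) (by positivity)]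
  simpa [hyperclique] using
    congrArg (Nat.cast : ℕ → ℝ) (Nat.choose_mul_eq_mul_choose_sub_one (n := ℓ) hk)

lemma wedOf_hyperclique_id (hkℓ : k ≤ ℓ) :
    (hyperclique ℓ k).wedOf (fun i : Fin ℓ => {i}) = k := by
  rw [FinHypergraph.wedOf_singleton (fun i => i),
    sup_congr rfl fun e he => by simpa using mem_hyperclique_edges.1 he,
    sup_const (hyperclique_edges_nonempty hkℓ)]

lemma wedOf_hyperclique_copies (hkℓ : k ≤ ℓ) (m : ℕ) :
    (hyperclique ℓ k).wedOf (fun i : Fin (m * ℓ) => {(finProdFinEquiv.symm i).2}) = m * k := by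
  have hcount : ∀ e ∈ (hyperclique ℓ k).edges,
      #{i : Fin (m * ℓ) | (finProdFinEquiv.symm i).2 ∈ e} = m * k := fun e he => by
    rw [card_equiv finProdFinEquiv.symm (t := univ ×ˢ e) (by simp), card_product, card_univ,
      Fintype.card_fin, mem_hyperclique_edges.1 he]
  rw [FinHypergraph.wedOf_singleton, sup_congr rfl hcount,
    sup_const (hyperclique_edges_nonempty hkℓ)]

end Hyperclique

section Widths

variable {ℓ k : ℕ}

theorem embPower_hyperclique (hk : 1 < k) (hkℓ : k ≤ ℓ) :
    embPower (hyperclique ℓ k) = ℓ / k := by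
  have : Nonempty (Fin ℓ) := ⟨⟨0, by omega⟩⟩
  have hk0 : (0 : ℝ) < k := by exact_mod_cast (by omega : 0 < k)
  have hℓ0 : (0 : ℝ) < ℓ := by exact_mod_cast (by omega : 0 < ℓ)
  have hlower (j : ℕ) : (j : ℝ) ≤ (hyperclique ℓ k).wed j * (ℓ / k) :=
    sum_hypercliqueCover (k := k) (by omega) hkℓ ▸
      (isFracCover_hypercliqueCover (by omega) hkℓ).natCast_le_wed_mul j
  -- two copies of the identity embedding attain the bound
  have hwed : (hyperclique ℓ k).wed (2 * ℓ) = 2 * k := by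
    refine le_antisymm (wedOf_hyperclique_copies hkℓ 2 ▸ FinHypergraph.wed_le_wedOf
      ((coversPairs_hyperclique hk hkℓ).isCliqueEmb_singleton _)) ?_
    have h := hlower (2 * ℓ)
    rw [mul_div_assoc', le_div_iff₀ hk0] at h
    have : ((2 * k : ℕ) : ℝ) ≤ (hyperclique ℓ k).wed (2 * ℓ) := by
      push_cast at h ⊢
      exact le_of_mul_le_mul_right (by linarith) hℓ0
    exact_mod_cast this
  refine IsGreatest.csSup_eq ⟨⟨2 * ℓ, by omega, ?_⟩, ?_⟩
  · rw [hwed]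
    push_cast
    field_simp
  · rintro x ⟨j, -, rfl⟩
    exact div_le_of_le_mul₀ (Nat.cast_nonneg _) (by positivity) (by rw [mul_comm]; exact hlower j)

theorem subw_hyperclique (hk : 1 < k) (hkℓ : k ≤ ℓ) :
    subw (hyperclique ℓ k) = ℓ / k := by
  have hH := coversPairs_hyperclique hk hkℓ
  have hk0 : (0 : ℝ) ≤ k := k.cast_nonneg
  refine IsGreatest.csSup_eq ⟨⟨fun S => #S / k, fun S => by positivity, monotone_card_div hk0,
    submodular_card_div _, fun e he => by simp [mem_hyperclique_edges.1 he, div_self_le_one],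
    ((hH.sInf_treeDecomp_eq fun S => (#S : ℝ) / k).trans (by simp)).symm⟩, ?_⟩
  rintro x ⟨F, hF0, hmono, hF, hedge, rfl⟩
  rw [hH.sInf_treeDecomp_eq, ← sum_hypercliqueCover (by omega) hkℓ]
  have hw := isFracCover_hypercliqueCover (by omega) hkℓ
  calc F univ ≤ ∑ e ∈ (hyperclique ℓ k).edges, hypercliqueCover ℓ k e * F e :=
        hF.le_sum_mul_of_isFracCover hmono (hF0 ∅) ⟨⟨0, by omega⟩, mem_univ _⟩ hw
    _ ≤ ∑ e ∈ (hyperclique ℓ k).edges, hypercliqueCover ℓ k e :=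
        sum_le_sum fun e he => mul_le_of_le_one_right (hw.1 e) (hedge e he)

theorem fhw_hyperclique (hk : 1 < k) (hkℓ : k ≤ ℓ) :
    fhw (hyperclique ℓ k) = ℓ / k := by
  rw [(coversPairs_hyperclique hk hkℓ).fhw_eq]
  refine IsLeast.csInf_eq ⟨⟨_, isFracCover_hypercliqueCover (by omega) hkℓ,
    (sum_hypercliqueCover (by omega) hkℓ).le⟩, ?_⟩
  rintro b ⟨w, hw, hb⟩
  simpa using (hw.card_div_le_sum fun e he => (mem_hyperclique_edges.1 he).le).trans hb

end Widths

/-- For `H_{ℓ,k}` with `1 < k ≤ ℓ`: the identity embedding of the `ℓ`-clique has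
weak edge depth `k`, there is a fractional edge cover of total weight `ℓ/k`, and
`emb = subw = fhw = ℓ/k`. -/
theorem hyperclique_tight (ℓ k : ℕ) (hk1 : 1 < k) (hkℓ : k ≤ ℓ) :
    (hyperclique ℓ k).IsCliqueEmb ℓ (fun i : Fin ℓ => {i}) ∧
    (hyperclique ℓ k).wedOf (fun i : Fin ℓ => ({i} : Finset (Fin ℓ))) = k ∧
    (∃ w : Finset (Fin ℓ) → ℝ,
      IsFracCover (hyperclique ℓ k) Finset.univ w ∧
      ∑ e ∈ (hyperclique ℓ k).edges, w e ≤ (ℓ : ℝ) / k) ∧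
    embPower (hyperclique ℓ k) = (ℓ : ℝ) / k ∧
    subw (hyperclique ℓ k) = (ℓ : ℝ) / k ∧
    fhw (hyperclique ℓ k) = (ℓ : ℝ) / k :=
  ⟨(coversPairs_hyperclique hk1 hkℓ).isCliqueEmb_singleton id,
    wedOf_hyperclique_id hkℓ,
    ⟨_, isFracCover_hypercliqueCover (by omega) hkℓ, (sum_hypercliqueCover (by omega) hkℓ).le⟩,
    embPower_hyperclique hk1 hkℓ, subw_hyperclique hk1 hkℓ, fhw_hyperclique hk1 hkℓ⟩
end
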